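/- Let G be a connected labeled semi-Hamiltonian graph on [n]. Then rad(I_G) = rad(I_{L_n}), and hence ara(I_G) ≤ ara(I_{L_n}) ≤ n-1. -/
import Mathlib


open MvPolynomial

/-- The Hankel binomial `g_{ij} = x_i x_{j+1} - x_j x_{i+1}` (0-indexed vertices). -/
noncomputable def hg (n : ℕ) (K : Type*) [Field K] (i j : Fin n) :
    MvPolynomial (Fin (n + 1)) K :=
  X i.castSucc * X j.succ - X j.castSucc * X i.succ

/-- The generating set of the Hankel edge ideal of a graph `G` on `[n]`. -/
noncomputable def hgenSet (n : ℕ) (K : Type*) [Field K] (G : SimpleGraph (Fin n)) :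
    Set (MvPolynomial (Fin (n + 1)) K) :=
  { f | ∃ i j : Fin n, i < j ∧ G.Adj i j ∧ f = hg n K i j }

/-- The Hankel edge ideal `I_G`. -/
noncomputable def hankelIdeal (n : ℕ) (K : Type*) [Field K] (G : SimpleGraph (Fin n)) :
    Ideal (MvPolynomial (Fin (n + 1)) K) :=
  Ideal.span (hgenSet n K G)

/-- `I_X`, the ideal of 2-minors of the 2×n Hankel matrix, i.e. `I_{K_n}`. -/
noncomputable def IX (n : ℕ) (K : Type*) [Field K] :
    Ideal (MvPolynomial (Fin (n + 1)) K) :=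
  hankelIdeal n K ⊤

/-- The height of an ideal: the infimum of the heights of primes containing it. -/
noncomputable def ht {R : Type*} [CommRing R] (I : Ideal R) : ℕ∞ :=
  ⨅ (p : PrimeSpectrum R) (_ : I ≤ p.asIdeal), Order.height p

/-- The minimal number of generators of an ideal. -/
noncomputable def mu {R : Type*} [CommRing R] (I : Ideal R) : ℕ∞ :=
  ⨅ (s : Finset R) (_ : Ideal.span (s : Set R) = I), (s.card : ℕ∞)

/-- The arithmetical rank of an ideal. -/
noncomputable def ara {R : Type*} [CommRing R] (I : Ideal R) : ℕ∞ :=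
  ⨅ (s : Finset R) (_ : (Ideal.span (s : Set R)).radical = I.radical), (s.card : ℕ∞)

/-- The labeled path `L_n` with edges `{i, i+1}` (0-indexed). -/
def pathG (n : ℕ) : SimpleGraph (Fin n) :=
  SimpleGraph.fromRel (fun i j => (i : ℕ) + 1 = (j : ℕ))

/-- The labeled cycle `C_n` with edges `{i, i+1}` and `{0, n-1}` (0-indexed). -/
def cycleG (n : ℕ) : SimpleGraph (Fin n) :=
  SimpleGraph.fromRel (fun i j =>
    (i : ℕ) + 1 = (j : ℕ) ∨ ((i : ℕ) = 0 ∧ (j : ℕ) = n - 1))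

/-- The monomial prime ideal generated by the variables with index in `[lo, hi]` (0-indexed). -/
noncomputable def Pvars (n : ℕ) (K : Type*) [Field K] (lo hi : ℕ) :
    Ideal (MvPolynomial (Fin (n + 1)) K) :=
  Ideal.span { f | ∃ i : Fin (n + 1), lo ≤ (i : ℕ) ∧ (i : ℕ) ≤ hi ∧ f = X i }

noncomputable def vv (n : ℕ) (K : Type*) [Field K] (k : ℕ) :
    MvPolynomial (Fin (n + 1)) K :=
  if h : k < n + 1 then X ⟨k, h⟩ else 0

noncomputable def hgN (n : ℕ) (K : Type*) [Field K] (i j : ℕ) :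
    MvPolynomial (Fin (n + 1)) K :=
  vv n K i * vv n K (j + 1) - vv n K j * vv n K (i + 1)

lemma bridge (n : ℕ) (K : Type*) [Field K] (i j : Fin n) :
    hg n K i j = hgN n K i.1 j.1 := by
  have hi : (i : ℕ) < n + 1 := Nat.lt_succ_of_lt i.isLt
  have hj : (j : ℕ) < n + 1 := Nat.lt_succ_of_lt j.isLt
  have hi1 : (i : ℕ) + 1 < n + 1 := Nat.succ_lt_succ i.isLt
  have hj1 : (j : ℕ) + 1 < n + 1 := Nat.succ_lt_succ j.isLt
  simp only [hg, hgN, vv, dif_pos hi, dif_pos hj, dif_pos hi1, dif_pos hj1]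
  rfl

lemma gen_mem (n : ℕ) (K : Type*) [Field K] {k : ℕ} (hk : k + 1 < n) :
    hgN n K k (k + 1) ∈ hankelIdeal n K (pathG n) := by
  apply Ideal.subset_span
  have hb := (bridge n K (⟨k, by omega⟩ : Fin n) ⟨k + 1, hk⟩).symm
  refine ⟨⟨k, by omega⟩, ⟨k + 1, hk⟩, by simp [Fin.lt_def], ?_, hb⟩
  rw [pathG, SimpleGraph.fromRel_adj]
  exact ⟨by simp [Fin.ext_iff], Or.inl rfl⟩

lemma sq_mem {R : Type*} [CommRing R] {I : Ideal R} {f : R}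
    (h : f * f ∈ I.radical) : f ∈ I.radical := by
  rw [← Ideal.radical_idem I]
  exact Ideal.mem_radical_iff.mpr ⟨2, by rwa [pow_two]⟩

lemma key (n : ℕ) (K : Type*) [Field K] :
    ∀ d i j : ℕ, j - i ≤ d → i < j → j < n → ¬(i = 0 ∧ j = n - 1) →
      hgN n K i j ∈ (hankelIdeal n K (pathG n)).radical := by
  intro d
  induction d with
  | zero => intro i j h1 h2; omega
  | succ d ih =>
    intro i j hd hij hjn hcond
    set I := hankelIdeal n K (pathG n) with hI
    by_cases hstep : j = i + 1
    · subst hstep; exact Ideal.le_radical (gen_mem n K hjn)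
    have h2 : i + 1 < j := by omega
    obtain ⟨j', rfl⟩ : ∃ j', j = j' + 1 := ⟨j - 1, by omega⟩
    set v : ℕ → MvPolynomial (Fin (n+1)) K := vv n K with hv
    -- IH members
    have ha : hgN n K (i+1) (j'+1) ∈ I.radical :=
      ih (i.succ) (j'+1) (by omega) (by omega) hjn (by omega)
    have hb : hgN n K i j' ∈ I.radical :=
      ih i j' (by omega) (by omega) (by omega) (by omega)
    -- generators
    have hgi : hgN n K i (i+1) ∈ I := gen_mem n K (by omega)
    have hgj : hgN n K j' (j'+1) ∈ I := gen_mem n K (by omega)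
    -- relation A : v(i+1) * f ∈ radical
    have hu1 : v (i+1) * hgN n K i (j'+1) ∈ I.radical := by
      have heq : v (i+1) * hgN n K i (j'+1) =
          v i * hgN n K (i+1) (j'+1) + v (j'+1) * hgN n K i (i+1) := by
        simp only [hgN, hv]; ring
      rw [heq]
      exact add_mem (Ideal.mul_mem_left _ _ ha)
        (Ideal.mul_mem_left _ _ (Ideal.le_radical hgi))
    -- relation B : v(j'+1) * f ∈ radical
    have hu2 : v (j'+1) * hgN n K i (j'+1) ∈ I.radical := by
      have heq : v (j'+1) * hgN n K i (j'+1) =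
          v (j'+1+1) * hgN n K i j' + v (i+1) * hgN n K j' (j'+1) := by
        simp only [hgN, hv]; ring
      rw [heq]
      exact add_mem (Ideal.mul_mem_left _ _ hb)
        (Ideal.mul_mem_left _ _ (Ideal.le_radical hgj))
    -- the troublesome term t = v i * v (j'+2) * f
    have ht : v i * v (j'+1+1) * hgN n K i (j'+1) ∈ I.radical := by
      apply sq_mem
      rcases Nat.eq_zero_or_pos i with hi0 | hipos
      · subst hi0
        -- use v(j'+2)^2 = v(j'+1) v(j'+3) - g_{j'+1},  j'+2 < n
        have hj2 : (j'+1) + 1 < n := by omega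
        have hgj1 : hgN n K (j'+1) (j'+1+1) ∈ I := gen_mem n K hj2
        have heq : (v 0 * v (j'+1+1) * hgN n K 0 (j'+1)) *
            (v 0 * v (j'+1+1) * hgN n K 0 (j'+1)) =
            (v 0 * v 0 * v (j'+1+1+1) * hgN n K 0 (j'+1)) *
              (v (j'+1) * hgN n K 0 (j'+1)) -
            (v 0 * v 0 * hgN n K 0 (j'+1) * hgN n K 0 (j'+1)) *
              hgN n K (j'+1) (j'+1+1) := by
          simp only [hgN, hv]; ring
        rw [heq]
        exact sub_mem (Ideal.mul_mem_left _ _ hu2)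
          (Ideal.mul_mem_left _ _ (Ideal.le_radical hgj1))
      · obtain ⟨i'', rfl⟩ : ∃ i'', i = i'' + 1 := ⟨i - 1, by omega⟩
        have hgi2 : hgN n K i'' (i''+1) ∈ I := gen_mem n K (by omega)
        have heq : (v (i''+1) * v (j'+1+1) * hgN n K (i''+1) (j'+1)) *
            (v (i''+1) * v (j'+1+1) * hgN n K (i''+1) (j'+1)) =
            (v i'' * v (j'+1+1) * v (j'+1+1) * hgN n K (i''+1) (j'+1)) *
              (v (i''+1+1) * hgN n K (i''+1) (j'+1)) -
            (v (j'+1+1) * v (j'+1+1) * hgN n K (i''+1) (j'+1) * hgN n K (i''+1) (j'+1)) *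
              hgN n K i'' (i''+1) := by
          simp only [hgN, hv]; ring
        rw [heq]
        exact sub_mem (Ideal.mul_mem_left _ _ hu1)
          (Ideal.mul_mem_left _ _ (Ideal.le_radical hgi2))
    -- finish: f^2 = t - v j' *? ...
    apply sq_mem
    have heq : hgN n K i (j'+1) * hgN n K i (j'+1) =
        (v i * v (j'+1+1) * hgN n K i (j'+1)) -
        v (j'+1) * (v (i+1) * hgN n K i (j'+1)) := by
      simp only [hgN, hv]; ring
    rw [heq]
    exact sub_mem ht (Ideal.mul_mem_left _ _ hu1)

lemma path_adj_iff (n : ℕ) {i j : Fin n} (hij : i < j) :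
    (pathG n).Adj i j ↔ (j : ℕ) = (i : ℕ) + 1 := by
  rw [pathG, SimpleGraph.fromRel_adj]
  constructor
  · rintro ⟨-, h | h⟩
    · omega
    · exact absurd (Fin.lt_def.mp hij) (by omega)
  · intro h
    exact ⟨by simp [Fin.ext_iff]; omega, Or.inl h.symm⟩

/-- For a connected labeled semi-Hamiltonian graph `G` on `[n]`,
`rad(I_G) = rad(I_{L_n})`, hence `ara(I_G) ≤ ara(I_{L_n}) ≤ n - 1`. -/
theorem stmt_13 (n : ℕ) (K : Type*) [Field K] (hn : 2 ≤ n)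
    (G : SimpleGraph (Fin n)) (hG : G.Connected) (hpath : pathG n ≤ G)
    (hne : ¬ G.Adj ⟨0, by omega⟩ ⟨n - 1, by omega⟩) :
    (hankelIdeal n K G).radical = (hankelIdeal n K (pathG n)).radical ∧
      ara (hankelIdeal n K G) ≤ ara (hankelIdeal n K (pathG n)) ∧
      ara (hankelIdeal n K (pathG n)) ≤ ((n - 1 : ℕ) : ℕ∞) := by
  have hsub : hankelIdeal n K (pathG n) ≤ hankelIdeal n K G :=
    Ideal.span_mono (by rintro f ⟨i, j, h1, h2, h3⟩; exact ⟨i, j, h1, hpath h2, h3⟩)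
  have hGR : hankelIdeal n K G ≤ (hankelIdeal n K (pathG n)).radical := by
    rw [hankelIdeal, Ideal.span_le]
    rintro f ⟨i, j, hij, hadj, rfl⟩
    rw [bridge]
    refine key n K n i.1 j.1 (by omega) (Fin.lt_def.mp hij) j.isLt ?_
    rintro ⟨h1, h2⟩
    have e1 : i = (⟨0, by omega⟩ : Fin n) := Fin.ext h1
    have e2 : j = (⟨n - 1, by omega⟩ : Fin n) := Fin.ext h2
    exact hne (e1 ▸ e2 ▸ hadj)
  have heq : (hankelIdeal n K G).radical = (hankelIdeal n K (pathG n)).radical := by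
    refine le_antisymm ?_ (Ideal.radical_mono hsub)
    calc (hankelIdeal n K G).radical
        ≤ (hankelIdeal n K (pathG n)).radical.radical := Ideal.radical_mono hGR
      _ = _ := Ideal.radical_idem _
  refine ⟨heq, le_of_eq (by simp only [ara, heq]), ?_⟩
  -- bound ara of path ideal by n-1
  classical
  set s : Finset (MvPolynomial (Fin (n + 1)) K) :=
    (Finset.univ : Finset (Fin (n - 1))).image (fun k => hgN n K k.1 (k.1 + 1)) with hs
  have hspan : Ideal.span (s : Set _) = hankelIdeal n K (pathG n) := by
    apply le_antisymm
    · rw [Ideal.span_le]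
      intro f hf
      simp only [hs, Finset.coe_image, Finset.coe_univ, Set.image_univ, Set.mem_range] at hf
      obtain ⟨k, rfl⟩ := hf
      exact gen_mem n K (by omega)
    · rw [hankelIdeal, Ideal.span_le]
      rintro f ⟨i, j, hij, hadj, rfl⟩
      apply Ideal.subset_span
      have hj := (path_adj_iff n hij).mp hadj
      simp only [hs, Finset.coe_image, Finset.coe_univ, Set.image_univ, Set.mem_range]
      refine ⟨⟨i.1, by omega⟩, ?_⟩
      rw [bridge]
      exact congrArg (hgN n K i.1) hj.symm
  have hcard : (s.card : ℕ∞) ≤ ((n - 1 : ℕ) : ℕ∞) := by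
    have := Finset.card_image_le (s := (Finset.univ : Finset (Fin (n - 1))))
      (f := fun k => hgN n K k.1 (k.1 + 1))
    simp only [Finset.card_univ, Fintype.card_fin] at this
    exact_mod_cast (hs ▸ this)
  exact le_trans (iInf₂_le s (by rw [hspan])) hcard
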